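/- With the setup below: (i) B restricts to a nondegenerate bilinear form on the (−1)-eigenspace E₋ of σ; and (ii) for any basis (X_i) of E₋ with family (X_i^∨) in E₋ satisfying B(X_i^∨, X_j) = δ_{ij}, and any basis (Y_j) of E with left dual basis (Y_j^∨), one has 2·Σ_i X_i ⊗ X_i^∨ = Σ_j Y_j ⊗ Y_j^∨ − Σ_j σ(Y_j) ⊗ Y_j^∨ in E ⊗_k E. -/

import Mathlib

/-!
Write `E₋` for the `(-1)`-eigenspace of `σ`. Since `σ` is an isometric involution, `B u (σ v) = -B u v`
for `u ∈ E₋`, hence `B u (v - σ v) = 2 B u v`; as `v - σ v ∈ E₋`, a vector of `E₋` orthogonal to `E₋`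
is orthogonal to everything, which gives (i). For (ii), both sides are the tensor
`Σ_j φ(Y_j) ⊗ Y_j^∨` of `φ = id - σ`: expanding `φ(Y_j) ∈ E₋` in the dual families `(X_i), (X_i^∨)`
and then `2 X_i^∨` in the dual bases `(Y_j^∨), (Y_j)` turns it into `Σ_i X_i ⊗ 2 X_i^∨`.
-/

open Finset TensorProduct

section DualFamily

variable {R M : Type*} [CommRing R] [AddCommGroup M] [Module R M] {ι : Type*} [Fintype ι]
  [DecidableEq ι]

theorem eq_sum_apply_smul_of_mem_span {f : ι → M →ₗ[R] R} {X : ι → M}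
    (hdual : ∀ i j, f i (X j) = if i = j then 1 else 0) {v : M}
    (hv : v ∈ Submodule.span R (Set.range X)) :
    v = ∑ i, f i v • X i := by
  obtain ⟨c, rfl⟩ := Submodule.mem_span_range_iff_exists_fun R |>.mp hv
  refine sum_congr rfl fun i _ => ?_
  simp [map_sum, hdual]

theorem eq_sum_apply_smul_of_span_eq_top {B : M →ₗ[R] M →ₗ[R] R}
    (hnd : ∀ x, (∀ y, B x y = 0) → x = 0) {Y Yd : ι → M}
    (hY : Submodule.span R (Set.range Y) = ⊤)
    (hdual : ∀ i j, B (Yd i) (Y j) = if i = j then 1 else 0) (w : M) :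
    w = ∑ j, B w (Y j) • Yd j := by
  rw [← sub_eq_zero]
  refine hnd _ fun y => ?_
  have hB : B (w - ∑ j, B w (Y j) • Yd j) = 0 :=
    LinearMap.ext_on_range hY fun l => by simp [hdual]
  rw [hB, LinearMap.zero_apply]

theorem sum_map_tmul_dual_eq {B : M →ₗ[R] M →ₗ[R] R}
    (hnd : ∀ x, (∀ y, B x y = 0) → x = 0) {κ : Type*} [Fintype κ] [DecidableEq κ]
    {X Xd x' : ι → M} (hX : ∀ i j, B (Xd i) (X j) = if i = j then 1 else 0)
    {Y Yd : κ → M} (hY : Submodule.span R (Set.range Y) = ⊤)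
    (hYd : ∀ i j, B (Yd i) (Y j) = if i = j then 1 else 0)
    (φ : M →ₗ[R] M) (hφ : ∀ j, φ (Y j) ∈ Submodule.span R (Set.range X))
    (hadj : ∀ i y, B (Xd i) (φ y) = B (x' i) y) :
    ∑ j, φ (Y j) ⊗ₜ[R] Yd j = ∑ i, X i ⊗ₜ[R] x' i :=
  calc ∑ j, φ (Y j) ⊗ₜ[R] Yd j
      = ∑ j, (∑ i, B (Xd i) (φ (Y j)) • X i) ⊗ₜ[R] Yd j := by
        refine sum_congr rfl fun j _ => ?_
        rw [← eq_sum_apply_smul_of_mem_span hX (hφ j)]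
    _ = ∑ i, X i ⊗ₜ[R] ∑ j, B (x' i) (Y j) • Yd j := by
        simp only [sum_tmul, tmul_sum, smul_tmul, hadj]
        exact sum_comm
    _ = ∑ i, X i ⊗ₜ[R] x' i := by
        simp only [← eq_sum_apply_smul_of_span_eq_top hnd hY hYd]

end DualFamily

section Involution

variable {R E : Type*} [CommRing R] [AddCommGroup E] [Module R E]
  {B : E →ₗ[R] E →ₗ[R] R} {σ : E →ₗ[R] E}

theorem map_sub_map_self (hσ : ∀ x, σ (σ x) = x) (v : E) : σ (v - σ v) = -(v - σ v) := by
  rw [map_sub, hσ, neg_sub]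

theorem apply_sub_map_of_map_eq_neg (hσ : ∀ x, σ (σ x) = x)
    (hσB : ∀ x y, B (σ x) (σ y) = B x y) {u : E} (hu : σ u = -u) (v : E) :
    B u (v - σ v) = 2 * B u v := by
  have hflip : B u (σ v) = -B u v := by
    rw [← hσB, hu, hσ, map_neg, LinearMap.neg_apply]
  rw [map_sub, hflip]
  ring

theorem eq_zero_of_forall_map_eq_neg_apply_eq_zero [NoZeroDivisors R] (h2 : (2 : R) ≠ 0)
    (hnd : ∀ x, (∀ y, B x y = 0) → x = 0) (hσ : ∀ x, σ (σ x) = x)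
    (hσB : ∀ x y, B (σ x) (σ y) = B x y) {x : E} (hx : σ x = -x)
    (hxy : ∀ y, σ y = -y → B x y = 0) : x = 0 :=
  hnd x fun y => by
    have h := hxy _ (map_sub_map_self hσ y)
    rw [apply_sub_map_of_map_eq_neg hσ hσB hx] at h
    exact (mul_eq_zero.mp h).resolve_left h2

end Involution

theorem stmt12_general (k : Type*) [Field k] (hchar : (2 : k) ≠ 0)
    (E : Type*) [AddCommGroup E] [Module k E]
    (Bf : E →ₗ[k] E →ₗ[k] k)
    (hnd_left : ∀ x : E, (∀ y : E, Bf x y = 0) → x = 0)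
    (σ : E →ₗ[k] E) (hσ : ∀ x, σ (σ x) = x)
    (hσB : ∀ x y, Bf (σ x) (σ y) = Bf x y) :
    (∀ x : E, σ x = -x → (∀ y : E, σ y = -y → Bf x y = 0) → x = 0) ∧
    (∀ (N : ℕ) (X Xd : Fin N → E),
      (∀ i, σ (X i) = -(X i)) → (∀ i, σ (Xd i) = -(Xd i)) →
      LinearIndependent k X →
      (∀ x : E, σ x = -x → x ∈ Submodule.span k (Set.range X)) →
      (∀ i j, Bf (Xd i) (X j) = if i = j then (1 : k) else 0) →
      ∀ (M : ℕ) (Y Yd : Fin M → E),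
        LinearIndependent k Y →
        Submodule.span k (Set.range Y) = ⊤ →
        (∀ i j, Bf (Yd i) (Y j) = if i = j then (1 : k) else 0) →
        (2 : k) • (∑ i, (X i) ⊗ₜ[k] (Xd i) : E ⊗[k] E)
          = ∑ j, (Y j) ⊗ₜ[k] (Yd j) - ∑ j, (σ (Y j)) ⊗ₜ[k] (Yd j)) := by
  refine ⟨fun x hx hxy =>
    eq_zero_of_forall_map_eq_neg_apply_eq_zero hchar hnd_left hσ hσB hx hxy, ?_⟩
  intro N X Xd _ hXd _ hXspan hXdual M Y Yd _ hYspan hYdual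
  have hφ : ∀ j, (LinearMap.id - σ : E →ₗ[k] E) (Y j) ∈ Submodule.span k (Set.range X) :=
    fun j => hXspan _ (map_sub_map_self hσ (Y j))
  have hadj : ∀ i y, Bf (Xd i) ((LinearMap.id - σ : E →ₗ[k] E) y) = Bf ((2 : k) • Xd i) y := fun i y => by
    simpa using apply_sub_map_of_map_eq_neg hσ hσB (hXd i) y
  have key := sum_map_tmul_dual_eq hnd_left hXdual hYspan hYdual _ hφ hadj
  simp only [LinearMap.sub_apply, LinearMap.id_apply, sub_tmul, sum_sub_distrib] at key
  rw [key, smul_sum]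
  simp only [tmul_smul]

/-- For a nondegenerate bilinear form `B` on a finite-dimensional space `E` and an
isometric involution `σ`, (i) `B` restricts nondegenerately to the `(−1)`-eigenspace `E₋` of `σ`,
and (ii) for dual families `(X_i), (X_i^∨)` in `E₋` and a basis `(Y_j)` of `E` with left dual
basis `(Y_j^∨)`: `2 Σ_i X_i ⊗ X_i^∨ = Σ_j Y_j ⊗ Y_j^∨ − Σ_j σ(Y_j) ⊗ Y_j^∨` in `E ⊗_k E`. -/
theorem stmt12 (k : Type*) [Field k] (hchar : (2 : k) ≠ 0)
    (E : Type*) [AddCommGroup E] [Module k E] [FiniteDimensional k E]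
    (Bf : E →ₗ[k] E →ₗ[k] k)
    (hnd_left : ∀ x : E, (∀ y : E, Bf x y = 0) → x = 0)
    (hnd_right : ∀ y : E, (∀ x : E, Bf x y = 0) → y = 0)
    (σ : E →ₗ[k] E) (hσ : ∀ x, σ (σ x) = x)
    (hσB : ∀ x y, Bf (σ x) (σ y) = Bf x y) :
    (∀ x : E, σ x = -x → (∀ y : E, σ y = -y → Bf x y = 0) → x = 0) ∧
    (∀ (N : ℕ) (X Xd : Fin N → E),
      (∀ i, σ (X i) = -(X i)) → (∀ i, σ (Xd i) = -(Xd i)) →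
      LinearIndependent k X →
      (∀ x : E, σ x = -x → x ∈ Submodule.span k (Set.range X)) →
      (∀ i j, Bf (Xd i) (X j) = if i = j then (1 : k) else 0) →
      ∀ (M : ℕ) (Y Yd : Fin M → E),
        LinearIndependent k Y →
        Submodule.span k (Set.range Y) = ⊤ →
        (∀ i j, Bf (Yd i) (Y j) = if i = j then (1 : k) else 0) →
        (2 : k) • (∑ i, (X i) ⊗ₜ[k] (Xd i) : E ⊗[k] E)
          = ∑ j, (Y j) ⊗ₜ[k] (Yd j) - ∑ j, (σ (Y j)) ⊗ₜ[k] (Yd j)) :=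
  stmt12_general k hchar E Bf hnd_left σ hσ hσB
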